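/- Let A be a unital C*-algebra and let E be a Hilbert C*-module over A possessing an orthonormal basis ε. Let g, g₁, g₂ ∈ CI and suppose g₁ ≠ α g₂ and g₂ ≠ β g₁ for all α, β ∈ A. Then it cannot happen simultaneously that (g is an A-multiple of g₁ or g₁ is an A-multiple of g) and (g is an A-multiple of g₂ or g₂ is an A-multiple of g); that is, either g ≠ α g₁ and g₁ ≠ β g for all α, β ∈ A, or g ≠ α g₂ and g₂ ≠ β g for all α, β ∈ A. -/
import Mathlib


/-- A (left) Hilbert C*-module structure on `E` over the C*-algebra `A`:
an `A`-valued inner product, `A`-linear in the first variable and conjugate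
`A`-linear in the second, positive and definite, compatible with the norm of `E`,
for which `E` is complete. -/
structure HilbertModule (A : Type*) (E : Type*) [CStarAlgebra A]
    [NormedAddCommGroup E] [Module A E] where
  inner : E → E → A
  inner_add_left : ∀ x y z : E, inner (x + y) z = inner x z + inner y z
  inner_smul_left : ∀ (a : A) (x y : E), inner (a • x) y = a * inner x y
  inner_conj_symm : ∀ x y : E, inner y x = star (inner x y)
  inner_self_pos : ∀ x : E, ∃ c : A, inner x x = star c * c
  inner_self_eq_zero : ∀ x : E, inner x x = 0 → x = 0
  norm_sq_eq : ∀ x : E, ‖x‖ ^ 2 = ‖inner x x‖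
  complete : CompleteSpace E

namespace HilbertModule

variable {A E : Type*} [CStarAlgebra A] [NormedAddCommGroup E] [Module A E]
variable (M : HilbertModule A E)

/-- The "rank-one" module map `θ_{x,y} : ξ ↦ ⟨ξ,y⟩x`. -/
def theta (x y : E) : E → E := fun ξ => M.inner ξ y • x

/-- `e : ι → E` is an orthonormal basis: `⟨e i, e j⟩ = δ_{ij}` and every `x`
is the norm-convergent sum `Σ_i ⟨x, e i⟩ • e i`. -/
structure IsONB {ι : Type*} (e : ι → E) : Prop where
  ortho_self : ∀ i : ι, M.inner (e i) (e i) = 1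
  ortho_ne : ∀ i j : ι, i ≠ j → M.inner (e i) (e j) = 0
  total : ∀ x : E, HasSum (fun i => M.inner x (e i) • e i) x

/-- The coordinately invertible elements with respect to the orthonormal basis `e`:
nonzero elements all of whose coordinates are zero or invertible. -/
def CI {ι : Type*} (e : ι → E) : Set E :=
  {x | x ≠ 0 ∧ ∀ i : ι, M.inner (e i) x = 0 ∨ IsUnit (M.inner (e i) x)}

/-- `F(E)`: the `A`-linear span of the rank-one module maps `θ_{x,y}`. -/
def F : Submodule A (E → E) :=
  Submodule.span A {T : E → E | ∃ x y : E, T = M.theta x y}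

theorem theta_mem_F (x y : E) : M.theta x y ∈ M.F :=
  Submodule.subset_span ⟨x, y, rfl⟩

/-- `θ_{x,y}` as an element of `F(E)`. -/
def thetaF (x y : E) : M.F := ⟨M.theta x y, M.theta_mem_F x y⟩

/-- A map `T : E → E` is `A`-linear if it is additive and `A`-homogeneous. -/
def IsALinear (T : E → E) : Prop :=
  (∀ x y : E, T (x + y) = T x + T y) ∧ ∀ (a : A) (x : E), T (a • x) = a • T x

/-- A map `T : E → E` is conjugate `A`-linear if it is additive and
`T (a • x) = star a • T x`. -/
def IsConjLinear (T : E → E) : Prop :=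
  (∀ x y : E, T (x + y) = T x + T y) ∧ ∀ (a : A) (x : E), T (a • x) = star a • T x

/-- An `A`-linear map `Φ : F(E) → F(E)` is rank decreasing if it sends each `θ_{x,y₀}`
with `y₀ ∈ CI` to some `θ_{s,t₀}` with `t₀ ∈ CI`. -/
def RankDecreasing {ι : Type*} (e : ι → E) (Φ : M.F →ₗ[A] M.F) : Prop :=
  ∀ x : E, ∀ y₀ ∈ M.CI e, ∃ s : E, ∃ t₀ ∈ M.CI e,
    (Φ (M.thetaF x y₀) : E → E) = M.theta s t₀

/-- An `A`-linear map `Φ : F(E) → F(E)` is rank-1 preserving if it is rank decreasing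
and moreover `s ≠ 0` whenever `x ≠ 0`. -/
def Rank1Preserving {ι : Type*} (e : ι → E) (Φ : M.F →ₗ[A] M.F) : Prop :=
  ∀ x : E, ∀ y₀ ∈ M.CI e, ∃ s : E, ∃ t₀ ∈ M.CI e,
    (Φ (M.thetaF x y₀) : E → E) = M.theta s t₀ ∧ (x ≠ 0 → s ≠ 0)

theorem inner_smul_right' (a : A) (x y : E) :
    M.inner y (a • x) = M.inner y x * star a := by
  rw [M.inner_conj_symm, M.inner_smul_left, star_mul, ← M.inner_conj_symm]

theorem exists_unit_coord {ι : Type*} {e : ι → E} (he : M.IsONB e) {x : E}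
    (hx : x ∈ M.CI e) : ∃ i, IsUnit (M.inner (e i) x) := by
  by_contra h
  push_neg at h
  have hz : ∀ i, M.inner (e i) x = 0 := fun i => (hx.2 i).resolve_right (h i)
  have hz' : ∀ i, M.inner x (e i) = 0 := fun i => by
    rw [M.inner_conj_symm, hz i, star_zero]
  have hs := he.total x
  simp only [hz', zero_smul] at hs
  exact hx.1 (hs.unique hasSum_zero)

end HilbertModule

/-- if `g, g₁, g₂ ∈ CI` and `g₁, g₂` are not `A`-multiples of each other,
then `g` cannot be `A`-proportional to both `g₁` and `g₂`: either `g` and `g₁` are not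
`A`-multiples of each other, or `g` and `g₂` are not `A`-multiples of each other. -/
theorem not_multiple_of_both {A E ι : Type*} [CStarAlgebra A]
    [NormedAddCommGroup E] [Module A E]
    (M : HilbertModule A E) (e : ι → E) (he : M.IsONB e)
    (g g₁ g₂ : E) (hg : g ∈ M.CI e) (hg₁ : g₁ ∈ M.CI e) (hg₂ : g₂ ∈ M.CI e)
    (h₁ : ∀ α : A, g₁ ≠ α • g₂) (h₂ : ∀ β : A, g₂ ≠ β • g₁) :
    ((∀ α : A, g ≠ α • g₁) ∧ (∀ β : A, g₁ ≠ β • g)) ∨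
    ((∀ α : A, g ≠ α • g₂) ∧ (∀ β : A, g₂ ≠ β • g)) := by
  have hA : Nontrivial A := by
    refine ⟨0, 1, fun h01 => hg.1 ?_⟩
    calc g = (1 : A) • g := (one_smul A g).symm
    _ = (0 : A) • g := by rw [h01]
    _ = 0 := zero_smul A g
  by_contra hcon
  rw [not_or, not_and_or, not_and_or] at hcon
  obtain ⟨hc1, hc2⟩ := hcon
  push_neg at hc1 hc2
  rcases hc1 with ⟨α, hα⟩ | ⟨β, hβ⟩ <;> rcases hc2 with ⟨α', hα'⟩ | ⟨β', hβ'⟩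
  · -- g = α • g₁ and g = α' • g₂
    obtain ⟨i, hci⟩ := M.exists_unit_coord he hg
    have hcalc : M.inner (e i) g = M.inner (e i) g₁ * star α := by
      rw [hα, M.inner_smul_right']
    have hb₁ : IsUnit (M.inner (e i) g₁) := by
      refine (hg₁.2 i).resolve_left fun h0 => ?_
      rw [h0, zero_mul] at hcalc
      exact hci.ne_zero (hcalc ▸ rfl)
    obtain ⟨ub, hub⟩ := hb₁
    have hsα : IsUnit (star α) := by
      have : star α = (↑ub⁻¹ : A) * M.inner (e i) g := by
        rw [hcalc, ← hub, ← mul_assoc, Units.inv_mul, one_mul]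
      rw [this]
      exact (ub⁻¹.isUnit).mul hci
    obtain ⟨u, hu⟩ := isUnit_star.mp hsα
    refine h₁ ((↑u⁻¹ : A) * α') ?_
    calc g₁ = (1 : A) • g₁ := (one_smul A g₁).symm
    _ = ((↑u⁻¹ : A) * α) • g₁ := by rw [← hu, Units.inv_mul]
    _ = (↑u⁻¹ : A) • (α • g₁) := by rw [mul_smul]
    _ = (↑u⁻¹ : A) • (α' • g₂) := by rw [← hα, hα']
    _ = ((↑u⁻¹ : A) * α') • g₂ := (mul_smul _ _ _).symm
  · -- g = α • g₁ and g₂ = β' • g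
    refine h₂ (β' * α) ?_
    rw [hβ', hα, mul_smul]
  · -- g₁ = β • g and g = α' • g₂
    refine h₁ (β * α') ?_
    rw [hβ, hα', mul_smul]
  · -- g₁ = β • g and g₂ = β' • g
    obtain ⟨i, hbi⟩ := M.exists_unit_coord he hg₁
    have hcalc : M.inner (e i) g₁ = M.inner (e i) g * star β := by
      rw [hβ, M.inner_smul_right']
    have hc : IsUnit (M.inner (e i) g) := by
      refine (hg.2 i).resolve_left fun h0 => ?_
      rw [h0, zero_mul] at hcalc
      exact hbi.ne_zero (hcalc ▸ rfl)
    obtain ⟨uc, huc⟩ := hc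
    have hsβ : IsUnit (star β) := by
      have : star β = (↑uc⁻¹ : A) * M.inner (e i) g₁ := by
        rw [hcalc, ← huc, ← mul_assoc, Units.inv_mul, one_mul]
      rw [this]
      exact (uc⁻¹.isUnit).mul hbi
    obtain ⟨u, hu⟩ := isUnit_star.mp hsβ
    refine h₂ (β' * (↑u⁻¹ : A)) ?_
    calc g₂ = β' • g := hβ'
    _ = β' • ((1 : A) • g) := by rw [one_smul]
    _ = β' • (((↑u⁻¹ : A) * β) • g) := by rw [← hu, Units.inv_mul]
    _ = β' • ((↑u⁻¹ : A) • (β • g)) := by rw [mul_smul]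
    _ = β' • ((↑u⁻¹ : A) • g₁) := by rw [← hβ]
    _ = (β' * (↑u⁻¹ : A)) • g₁ := (mul_smul _ _ _).symm
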